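/- If Σ_{i=1}^{∞} λ_i² < ∞ (e.g., λ_n = 1/n), then the sample mean under the bandwagon rating process is not a consistent estimator of p. -/

import Mathlib

/-!
Write `D n = pbar r n - p`. The bandwagon rule gives `E[D (m + 1) | F m] = (1 - λ_{m+1}/(m+1)) D m`,
and conditioning does not increase second moments, so starting from `E[D 1 ^ 2] = p (1 - p)` we get
`E[D m ^ 2] ≥ p (1 - p) ∏_{k=2}^m (1 - λ_k/k) ^ 2`. Since `λ_k/k ≤ 1/2`, each factor is at least
`exp (-2 λ_k/k)`, and by Cauchy–Schwarz `∑ λ_k/k ≤ √(∑ λ_k²) √(∑_{k ≥ 2} 1/k²) ≤ √C`; so the second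
moment of `D m` never drops below `p (1 - p) exp (-4 √C) > 0`. But `|D n| ≤ 1`, so convergence of
`D n` to `0` in probability would force `E[D n ^ 2] → 0`.
-/

open MeasureTheory ProbabilityTheory Finset Filter

/-- Sample mean of the first `n` ratings (ratings are indexed from 1). -/
noncomputable def pbar {Ω : Type*} (r : ℕ → Ω → ℝ) (n : ℕ) (ω : Ω) : ℝ :=
  (∑ i ∈ Finset.Icc 1 n, r i ω) / n

/-- σ-algebra generated by the first `n` ratings. -/
def ratingsAlg {Ω : Type*} (r : ℕ → Ω → ℝ) (n : ℕ) : MeasurableSpace Ω :=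
  ⨆ i ∈ Finset.Icc 1 n, MeasurableSpace.comap (r i) (inferInstance : MeasurableSpace ℝ)

/-- The bandwagon rating process of Xie et al., as used in the paper. -/
structure Bandwagon {Ω : Type*} [MeasurableSpace Ω] (μ : Measure Ω)
    (p : ℝ) (lam : ℕ → ℝ) (r : ℕ → Ω → ℝ) : Prop where
  prob : IsProbabilityMeasure μ
  hp : 0 < p ∧ p < 1
  hlam1 : lam 1 = 1
  hlam_nonneg : ∀ n, 1 ≤ n → 0 ≤ lam n
  hlam_mono : ∀ n, 2 ≤ n → lam n ≤ lam (n - 1)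
  hmeas : ∀ n, Measurable (r n)
  hbin : ∀ n, 1 ≤ n → ∀ ω, r n ω = 0 ∨ r n ω = 1
  hfirst : ∫ ω, r 1 ω ∂μ = p
  hcond : ∀ n, 2 ≤ n →
    μ[r n | ratingsAlg r (n - 1)] =ᵐ[μ]
      fun ω => lam n * p + (1 - lam n) * pbar r (n - 1) ω

/-- Affine-corrected rating `r̂ᵢ`. -/
noncomputable def rhat {Ω : Type*} (r : ℕ → Ω → ℝ) (lam : ℕ → ℝ) (i : ℕ) (ω : Ω) : ℝ :=
  (r i ω - (1 - lam i) * pbar r (i - 1) ω) / lam i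

open scoped Topology

lemma Real.exp_neg_two_mul_le_one_sub {x : ℝ} (hx₀ : 0 ≤ x) (hx : x ≤ 1 / 2) :
    Real.exp (-(2 * x)) ≤ 1 - x := by
  have hexp : 2 * x + 1 ≤ Real.exp (2 * x) := Real.add_one_le_exp _
  have hinv : Real.exp (-(2 * x)) * Real.exp (2 * x) = 1 := by
    rw [← Real.exp_add, neg_add_cancel, Real.exp_zero]
  nlinarith [Real.exp_pos (-(2 * x)), mul_nonneg (sub_nonneg.2 hexp) (by linarith : 0 ≤ 1 - x)]

lemma Real.exp_neg_two_mul_sum_le_prod_one_sub {ι : Type*} (s : Finset ι) {x : ι → ℝ}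
    (hx₀ : ∀ i ∈ s, 0 ≤ x i) (hx : ∀ i ∈ s, x i ≤ 1 / 2) :
    Real.exp (-(2 * ∑ i ∈ s, x i)) ≤ ∏ i ∈ s, (1 - x i) := by
  rw [mul_sum, ← sum_neg_distrib, Real.exp_sum]
  exact prod_le_prod (fun i _ => (Real.exp_pos _).le)
    fun i hi => Real.exp_neg_two_mul_le_one_sub (hx₀ i hi) (hx i hi)

lemma sq_sum_Icc_two_div_le_sum_sq (f : ℕ → ℝ) (m : ℕ) :
    (∑ k ∈ Icc 2 m, f k / k) ^ 2 ≤ ∑ k ∈ Icc 2 m, f k ^ 2 := by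
  have hinv : ∑ k ∈ Icc 2 m, (1 / (k : ℝ)) ^ 2 ≤ 1 := by
    have hIcc : Icc 2 m = Ioo 1 (m + 1) := by ext k; simp; omega
    have h := sum_Ioo_inv_sq_le (α := ℝ) 1 (m + 1)
    norm_num at h
    simpa [hIcc, one_div, inv_pow] using h
  calc (∑ k ∈ Icc 2 m, f k / k) ^ 2
      = (∑ k ∈ Icc 2 m, f k * (1 / k)) ^ 2 := by simp only [mul_one_div]
    _ ≤ (∑ k ∈ Icc 2 m, f k ^ 2) * ∑ k ∈ Icc 2 m, (1 / (k : ℝ)) ^ 2 :=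
        sum_mul_sq_le_sq_mul_sq _ _ _
    _ ≤ ∑ k ∈ Icc 2 m, f k ^ 2 :=
        mul_le_of_le_one_right (sum_nonneg fun k _ => sq_nonneg _) hinv

section Probability

variable {Ω : Type*} {m m₀ : MeasurableSpace Ω} {μ : Measure Ω}

lemma integral_sq_condExp_le [IsFiniteMeasure μ] (hm : m ≤ m₀) {Y : Ω → ℝ} (hY : MemLp Y 2 μ) :
    ∫ ω, (μ[Y | m] ω) ^ 2 ∂μ ≤ ∫ ω, Y ω ^ 2 ∂μ := by
  have hvar_nonneg : 0 ≤ᵐ[μ] Var[Y; μ | m] :=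
    condExp_nonneg (ae_of_all _ fun ω => sq_nonneg _)
  calc ∫ ω, (μ[Y | m] ω) ^ 2 ∂μ ≤ ∫ ω, μ[Y ^ 2 | m] ω ∂μ := by
        refine integral_mono_ae (hY.condExp one_le_two).integrable_sq integrable_condExp ?_
        filter_upwards [hvar_nonneg, condVar_ae_eq_condExp_sq_sub_sq_condExp hm hY] with ω h0 hω
        simp only [Pi.zero_apply, hω, Pi.sub_apply, Pi.pow_apply] at h0
        linarith
    _ = ∫ ω, Y ω ^ 2 ∂μ := integral_condExp hm

lemma sq_mul_integral_sq_le_of_condExp_eq [IsFiniteMeasure μ] (hm : m ≤ m₀) {X Y : Ω → ℝ}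
    {a : ℝ} (hY : MemLp Y 2 μ) (hYX : μ[Y | m] =ᵐ[μ] fun ω => a * X ω) :
    a ^ 2 * ∫ ω, X ω ^ 2 ∂μ ≤ ∫ ω, Y ω ^ 2 ∂μ := by
  calc a ^ 2 * ∫ ω, X ω ^ 2 ∂μ = ∫ ω, (μ[Y | m] ω) ^ 2 ∂μ := by
        rw [← integral_const_mul]
        refine integral_congr_ae ?_
        filter_upwards [hYX] with ω hω
        rw [hω]; ring
    _ ≤ ∫ ω, Y ω ^ 2 ∂μ := integral_sq_condExp_le hm hY

lemma integral_sq_le_sq_add_measureReal [IsProbabilityMeasure μ] {f : Ω → ℝ} (hf : Measurable f)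
    (hf_le : ∀ ω, |f ω| ≤ 1) (ε : ℝ) :
    ∫ ω, f ω ^ 2 ∂μ ≤ ε ^ 2 + μ.real {ω | ε < |f ω|} := by
  set bad := {ω | ε < |f ω|}
  have hbad : MeasurableSet bad := measurableSet_lt measurable_const hf.abs
  have hpointwise : ∀ ω, f ω ^ 2 ≤ ε ^ 2 + bad.indicator 1 ω := by
    intro ω
    by_cases hω : ω ∈ bad
    · rw [Set.indicator_of_mem hω, Pi.one_apply, ← sq_abs]
      nlinarith [abs_nonneg (f ω), hf_le ω, sq_nonneg ε]
    · rw [Set.indicator_of_notMem hω, ← sq_abs]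
      have : |f ω| ≤ ε := not_lt.1 hω
      nlinarith [abs_nonneg (f ω)]
  have hint : Integrable (fun ω => f ω ^ 2) μ :=
    Integrable.of_bound (hf.pow_const 2).aestronglyMeasurable 1
      (ae_of_all _ fun ω => by simpa [abs_le, sq_le_one_iff_abs_le_one] using hf_le ω)
  calc ∫ ω, f ω ^ 2 ∂μ ≤ ∫ ω, (ε ^ 2 + bad.indicator 1 ω) ∂μ :=
        integral_mono hint ((integrable_const _).add ((integrable_const 1).indicator hbad))
          hpointwise
    _ = ε ^ 2 + μ.real bad := by
        rw [integral_add (integrable_const _) ((integrable_const 1).indicator hbad),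
          integral_indicator_one hbad]
        simp

lemma tendsto_integral_sq_of_tendsto_measure_lt_abs [IsProbabilityMeasure μ] {ι : Type*}
    {l : Filter ι} {f : ι → Ω → ℝ} (hf : ∀ i, Measurable (f i)) (hf_le : ∀ i ω, |f i ω| ≤ 1)
    (hlim : ∀ ε : ℝ, 0 < ε → Tendsto (fun i => μ {ω | ε < |f i ω|}) l (𝓝 0)) :
    Tendsto (fun i => ∫ ω, f i ω ^ 2 ∂μ) l (𝓝 0) := by
  refine tendsto_order.2 ⟨fun a ha => Eventually.of_forall fun i =>
    ha.trans_le (integral_nonneg fun ω => sq_nonneg _), fun η hη => ?_⟩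
  obtain ⟨ε, hε, hεη⟩ : ∃ ε : ℝ, 0 < ε ∧ ε ^ 2 < η / 2 :=
    ⟨Real.sqrt (η / 4), by positivity, by rw [Real.sq_sqrt (by positivity)]; linarith⟩
  have hreal : Tendsto (fun i => μ.real {ω | ε < |f i ω|}) l (𝓝 0) := by
    simpa [Function.comp_def, measureReal_def] using (ENNReal.tendsto_toReal ENNReal.zero_ne_top).comp (hlim ε hε)
  filter_upwards [hreal.eventually_lt_const (half_pos hη)] with i hi
  linarith [integral_sq_le_sq_add_measureReal (μ := μ) (hf i) (hf_le i) ε]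

end Probability

section SampleMean

variable {Ω : Type*} {r : ℕ → Ω → ℝ}

lemma pbar_mem_Icc (hr : ∀ i, 1 ≤ i → ∀ ω, r i ω ∈ Set.Icc (0 : ℝ) 1) (n : ℕ) (ω : Ω) :
    pbar r n ω ∈ Set.Icc (0 : ℝ) 1 := by
  have hsum : ∑ i ∈ Icc 1 n, r i ω ≤ n := by
    simpa using sum_le_sum fun i hi => (hr i (mem_Icc.1 hi).1 ω).2
  refine ⟨div_nonneg (sum_nonneg fun i hi => (hr i (mem_Icc.1 hi).1 ω).1) n.cast_nonneg, ?_⟩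
  rcases n.eq_zero_or_pos with rfl | hn
  · simp [pbar]
  · exact (div_le_one (by exact_mod_cast hn)).2 hsum

lemma pbar_succ (m : ℕ) (ω : Ω) :
    pbar r (m + 1) ω = (m * pbar r m ω + r (m + 1) ω) / (m + 1) := by
  rcases m.eq_zero_or_pos with rfl | hm
  · simp [pbar]
  · simp only [pbar, sum_Icc_succ_top (by omega : 1 ≤ m + 1)]
    push_cast
    field_simp

lemma measurable_ratingsAlg_pbar (n : ℕ) : Measurable[ratingsAlg r n] (pbar r n) :=
  (Finset.measurable_sum _ fun i hi => Measurable.of_comap_le <|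
    le_iSup₂ (f := fun j (_ : j ∈ Icc 1 n) => MeasurableSpace.comap (r j) _) i hi).div_const _

variable [MeasurableSpace Ω]

lemma measurable_pbar (hr : ∀ i, Measurable (r i)) (n : ℕ) : Measurable (pbar r n) :=
  (Finset.measurable_sum _ fun i _ => hr i).div_const _

lemma ratingsAlg_le (hr : ∀ i, Measurable (r i)) (n : ℕ) :
    ratingsAlg r n ≤ ‹MeasurableSpace Ω› :=
  iSup₂_le fun i _ => (hr i).comap_le

end SampleMean

namespace Bandwagon

variable {Ω : Type*} [MeasurableSpace Ω] {μ : Measure Ω} {p : ℝ} {lam : ℕ → ℝ}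
  {r : ℕ → Ω → ℝ}

lemma rating_mem_Icc (hbw : Bandwagon μ p lam r) {i : ℕ} (hi : 1 ≤ i) (ω : Ω) :
    r i ω ∈ Set.Icc (0 : ℝ) 1 := by
  rcases hbw.hbin i hi ω with h | h <;> simp [h]

lemma abs_pbar_sub_le_one (hbw : Bandwagon μ p lam r) (n : ℕ) (ω : Ω) :
    |pbar r n ω - p| ≤ 1 := by
  have h := pbar_mem_Icc (fun i hi => hbw.rating_mem_Icc hi) n ω
  have := hbw.hp
  exact abs_le.2 ⟨by linarith [h.1], by linarith [h.2]⟩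

lemma integrable_rating (hbw : Bandwagon μ p lam r) {i : ℕ} (hi : 1 ≤ i) :
    Integrable (r i) μ :=
  haveI := hbw.prob
  Integrable.of_bound (hbw.hmeas i).aestronglyMeasurable 1 <| ae_of_all _ fun ω => by
    have h := hbw.rating_mem_Icc hi ω
    exact abs_le.2 ⟨by linarith [h.1], h.2⟩

lemma memLp_pbar_sub (hbw : Bandwagon μ p lam r) (n : ℕ) :
    MemLp (fun ω => pbar r n ω - p) 2 μ :=
  haveI := hbw.prob
  MemLp.of_bound ((measurable_pbar hbw.hmeas n).sub_const p).aestronglyMeasurable 1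
    (ae_of_all _ (hbw.abs_pbar_sub_le_one n))

lemma integrable_pbar (hbw : Bandwagon μ p lam r) (n : ℕ) : Integrable (pbar r n) μ :=
  haveI := hbw.prob
  Integrable.of_bound (measurable_pbar hbw.hmeas n).aestronglyMeasurable 1 <|
    ae_of_all _ fun ω => by
      have h := pbar_mem_Icc (fun i hi => hbw.rating_mem_Icc hi) n ω
      exact abs_le.2 ⟨by linarith [h.1], h.2⟩

lemma condExp_pbar_succ_sub (hbw : Bandwagon μ p lam r) {m : ℕ} (hm : 1 ≤ m) :
    μ[fun ω => pbar r (m + 1) ω - p | ratingsAlg r m] =ᵐ[μ]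
      fun ω => (1 - lam (m + 1) / (m + 1 : ℕ)) * (pbar r m ω - p) := by
  have := hbw.prob
  have hcond : μ[r (m + 1) | ratingsAlg r m] =ᵐ[μ]
      fun ω => lam (m + 1) * p + (1 - lam (m + 1)) * pbar r m ω := by
    simpa using hbw.hcond (m + 1) (by omega)
  set g : Ω → ℝ := fun ω => (m * pbar r m ω - (m + 1) * p) / (m + 1)
  have hg_meas : StronglyMeasurable[ratingsAlg r m] g :=
    (((measurable_ratingsAlg_pbar m).const_mul _).sub_const _).div_const _ |>.stronglyMeasurable
  have hg_int : Integrable g μ :=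
    (((hbw.integrable_pbar m).const_mul _).sub (integrable_const _)).div_const _
  have hsplit : (fun ω => pbar r (m + 1) ω - p) = g + ((m : ℝ) + 1)⁻¹ • r (m + 1) := by
    funext ω
    simp only [pbar_succ, g, Pi.add_apply, Pi.smul_apply, smul_eq_mul]
    field_simp
    ring
  rw [hsplit]
  have hr_int : Integrable (((m : ℝ) + 1)⁻¹ • r (m + 1)) μ :=
    (hbw.integrable_rating (by omega)).smul _
  filter_upwards [condExp_add hg_int hr_int (ratingsAlg r m),
    condExp_smul ((m : ℝ) + 1)⁻¹ (r (m + 1)) (ratingsAlg r m), hcond] with ω hadd hsmul hω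
  rw [hadd, Pi.add_apply,
    condExp_of_stronglyMeasurable (ratingsAlg_le hbw.hmeas m) hg_meas hg_int, hsmul, Pi.smul_apply, hω, smul_eq_mul]
  simp only [g]
  push_cast
  field_simp
  ring

lemma integral_sq_pbar_one_sub (hbw : Bandwagon μ p lam r) :
    ∫ ω, (pbar r 1 ω - p) ^ 2 ∂μ = p * (1 - p) := by
  have := hbw.prob
  have hsq : (fun ω => (pbar r 1 ω - p) ^ 2) = fun ω => (1 - 2 * p) * r 1 ω + p ^ 2 := by
    funext ω
    rcases hbw.hbin 1 le_rfl ω with h | h <;> simp [pbar, h]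
    ring
  rw [hsq, integral_add ((hbw.integrable_rating le_rfl).const_mul _) (integrable_const _),
    integral_const_mul, hbw.hfirst]
  simp
  ring

lemma mul_sq_prod_le_integral_sq_pbar_sub (hbw : Bandwagon μ p lam r) {m : ℕ} (hm : 1 ≤ m) :
    p * (1 - p) * (∏ k ∈ Icc 2 m, (1 - lam k / k)) ^ 2 ≤ ∫ ω, (pbar r m ω - p) ^ 2 ∂μ := by
  have := hbw.prob
  induction m, hm using Nat.le_induction with
  | base => simp [hbw.integral_sq_pbar_one_sub]
  | succ m hm ih =>
    have hstep := sq_mul_integral_sq_le_of_condExp_eq (ratingsAlg_le hbw.hmeas m)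
      (hbw.memLp_pbar_sub (m + 1)) (hbw.condExp_pbar_succ_sub hm)
    rw [prod_Icc_succ_top (by omega), mul_pow]
    set a : ℝ := 1 - lam (m + 1) / ↑(m + 1)
    calc p * (1 - p) * ((∏ k ∈ Icc 2 m, (1 - lam k / k)) ^ 2 * a ^ 2)
        = a ^ 2 * (p * (1 - p) * (∏ k ∈ Icc 2 m, (1 - lam k / k)) ^ 2) := by ring
      _ ≤ a ^ 2 * ∫ ω, (pbar r m ω - p) ^ 2 ∂μ := by gcongr
      _ ≤ ∫ ω, (pbar r (m + 1) ω - p) ^ 2 ∂μ := hstep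

lemma lam_le_one (hbw : Bandwagon μ p lam r) {n : ℕ} (hn : 1 ≤ n) : lam n ≤ 1 := by
  induction n, hn using Nat.le_induction with
  | base => exact hbw.hlam1.le
  | succ n hn ih => simpa using (hbw.hlam_mono (n + 1) (by omega)).trans ih

lemma exp_neg_two_mul_sqrt_le_prod (hbw : Bandwagon μ p lam r) {C : ℝ}
    (hsum : ∀ n, ∑ i ∈ Icc 1 n, lam i ^ 2 ≤ C) (m : ℕ) :
    Real.exp (-(2 * Real.sqrt C)) ≤ ∏ k ∈ Icc 2 m, (1 - lam k / k) := by
  have hsq : (∑ k ∈ Icc 2 m, lam k / k) ^ 2 ≤ C :=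
    (sq_sum_Icc_two_div_le_sum_sq lam m).trans <|
      (sum_le_sum_of_subset_of_nonneg (Icc_subset_Icc_left one_le_two)
        fun i _ _ => sq_nonneg _).trans (hsum m)
  refine le_trans ?_ (Real.exp_neg_two_mul_sum_le_prod_one_sub _ (fun k hk => ?_) fun k hk => ?_)
  · gcongr
    exact (le_abs_self _).trans (Real.abs_le_sqrt hsq)
  · exact div_nonneg (hbw.hlam_nonneg k (by linarith [(mem_Icc.1 hk).1])) k.cast_nonneg
  · have hk₂ : 2 ≤ k := (mem_Icc.1 hk).1
    have hk₂' : (2 : ℝ) ≤ k := by exact_mod_cast hk₂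
    rw [div_le_iff₀ (by linarith)]
    linarith [hbw.lam_le_one (by omega : 1 ≤ k)]

end Bandwagon

theorem bandwagon_inconsistency_of_sample_mean {Ω : Type*} [MeasurableSpace Ω] (μ : MeasureTheory.Measure Ω)
    (p : ℝ) (lam : ℕ → ℝ) (r : ℕ → Ω → ℝ)
    (hbw : Bandwagon μ p lam r) (C : ℝ)
    (hsum : ∀ n, ∑ i ∈ Finset.Icc 1 n, (lam i) ^ 2 ≤ C) :
    ¬ (∀ ε : ℝ, 0 < ε →
        Filter.Tendsto (fun n : ℕ => μ {ω | ε < |pbar r n ω - p|})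
          Filter.atTop (nhds 0)) := by
  intro hconv
  have := hbw.prob
  have hmoment : Tendsto (fun n => ∫ ω, (pbar r n ω - p) ^ 2 ∂μ) atTop (𝓝 0) :=
    tendsto_integral_sq_of_tendsto_measure_lt_abs
      (fun n => (measurable_pbar hbw.hmeas n).sub_const p) hbw.abs_pbar_sub_le_one hconv
  have hp := hbw.hp
  have hδ : 0 < p * (1 - p) * Real.exp (-(2 * Real.sqrt C)) ^ 2 :=
    mul_pos (mul_pos hp.1 (sub_pos.2 hp.2)) (by positivity)
  obtain ⟨n, hn, hsmall⟩ :=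
    ((eventually_ge_atTop 1).and (hmoment.eventually_lt_const hδ)).exists
  have hlarge : p * (1 - p) * Real.exp (-(2 * Real.sqrt C)) ^ 2 ≤
      ∫ ω, (pbar r n ω - p) ^ 2 ∂μ := by
    refine le_trans ?_ (hbw.mul_sq_prod_le_integral_sq_pbar_sub hn)
    have hprod := hbw.exp_neg_two_mul_sqrt_le_prod hsum n
    gcongr
    exact mul_nonneg hp.1.le (sub_nonneg.2 hp.2.le)
  exact hsmall.not_ge hlarge
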